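/- Let φ(u) = exp{−1/(1 − 36u²)} for |u| < 1/6 and φ(u) = 0 otherwise, and define φ_i(t) = φ(t − (2i−1)/6) for i = 1, 2, 3 and t ∈ [0,1]. For λ ∈ (0,1), define κ₁(s,t) = Σ_{i=1}^3 φ_i(s) φ_i(t) and κ₂(s,t) = κ₁(s,t) + λ^{1/2}{φ₁(s) φ₃(t) + φ₃(s) φ₁(t)}. Then κ₁(s,t) = κ₂(s,t) for all s, t ∈ [0,1] with |s − t| ≤ 1/3, yet there exists (s,t) ∈ [0,1]² with κ₁(s,t) ≠ κ₂(s,t). Moreover, distinct values λ ≠ λ' in (0,1) give distinct kernels κ₂. -/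
import Mathlib


/-- The `C^∞` bump `φ(u) = exp{−1/(1 − 36u²)}` for `|u| < 1/6` and `0` otherwise. -/
noncomputable def bump6 (u : ℝ) : ℝ :=
  if |u| < 1 / 6 then Real.exp (-(1 - 36 * u ^ 2)⁻¹) else 0

/-- The bumps `φ_i(t) = φ(t − (2i−1)/6)` for `i = 1, 2, 3` (indexed by `Fin 3`). -/
noncomputable def phiBump (i : Fin 3) (t : ℝ) : ℝ :=
  bump6 (t - (2 * (i : ℕ) + 1) / 6)

/-- The rank-3 kernel `κ₁(s,t) = ∑_{i=1}^3 φ_i(s) φ_i(t)`. -/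
noncomputable def kappa₁ (s t : ℝ) : ℝ :=
  ∑ i : Fin 3, phiBump i s * phiBump i t

/-- The perturbed kernel `κ₂ = κ₁ + √λ (φ₁ ⊗ φ₃ + φ₃ ⊗ φ₁)`. -/
noncomputable def kappa₂ (lam s t : ℝ) : ℝ :=
  kappa₁ s t + Real.sqrt lam * (phiBump 0 s * phiBump 2 t + phiBump 2 s * phiBump 0 t)

lemma bump6_zero {u : ℝ} (h : ¬ |u| < 1 / 6) : bump6 u = 0 := by
  rw [bump6, if_neg h]

lemma phi0_mul_phi2 {s t : ℝ} (h : |s - t| ≤ 1 / 3) :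
    phiBump 0 s * phiBump 2 t = 0 := by
  by_contra hne
  have h0 : phiBump 0 s ≠ 0 := fun h0 => hne (by rw [h0, zero_mul])
  have h2 : phiBump 2 t ≠ 0 := fun h2 => hne (by rw [h2, mul_zero])
  have hs : |s - 1 / 6| < 1 / 6 := by
    by_contra hc
    exact h0 (by simpa [phiBump] using bump6_zero (by norm_num at hc ⊢; linarith [abs_nonneg (s - 1/6)]))
  have ht : |t - 5 / 6| < 1 / 6 := by
    by_contra hc
    exact h2 (by simpa [phiBump] using bump6_zero (by norm_num at hc ⊢; linarith))
  have hs' := abs_lt.mp hs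
  have ht' := abs_lt.mp ht
  have hst := abs_le.mp h
  linarith [hst.1, hst.2, hs'.1, hs'.2, ht'.1, ht'.2]

lemma phi_vals :
    phiBump 0 (1/6 : ℝ) = Real.exp (-1) ∧ phiBump 2 (5/6 : ℝ) = Real.exp (-1) ∧
    phiBump 1 (1/6 : ℝ) = 0 ∧ phiBump 2 (1/6 : ℝ) = 0 ∧
    phiBump 0 (5/6 : ℝ) = 0 ∧ phiBump 1 (5/6 : ℝ) = 0 := by
  refine ⟨?_, ?_, ?_, ?_, ?_, ?_⟩ <;>
    · simp only [phiBump, bump6]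
      norm_num [abs_of_nonneg, abs_of_nonpos]

lemma kappa₁_val : kappa₁ (1/6 : ℝ) (5/6 : ℝ) = 0 := by
  obtain ⟨_, _, h1, h2, h0, h3⟩ := phi_vals
  show ∑ i : Fin 3, phiBump i (1/6) * phiBump i (5/6) = 0
  rw [Fin.sum_univ_three, h1, h2, h0, h3]
  ring

lemma kappa₂_val (lam : ℝ) :
    kappa₂ lam (1/6 : ℝ) (5/6 : ℝ) = Real.sqrt lam * (Real.exp (-1) * Real.exp (-1)) := by
  obtain ⟨ha, hb, _, h2, h0, _⟩ := phi_vals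
  show kappa₁ (1/6) (5/6) + Real.sqrt lam *
      (phiBump 0 (1/6) * phiBump 2 (5/6) + phiBump 2 (1/6) * phiBump 0 (5/6)) = _
  rw [kappa₁_val, ha, hb, h2, h0]
  ring

/-- smooth finite-rank counterexample to band identifiability:
`κ₁` and `κ₂` agree on the band `|s − t| ≤ 1/3` of `[0,1]²` but are distinct, and
distinct `λ ≠ λ'` in `(0,1)` give distinct kernels `κ₂`. -/
theorem smooth_band_counterexample
    (lam : ℝ) (hlam : lam ∈ Set.Ioo (0 : ℝ) 1) :
    (∀ s ∈ Set.Icc (0 : ℝ) 1, ∀ t ∈ Set.Icc (0 : ℝ) 1,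
        |s - t| ≤ 1 / 3 → kappa₁ s t = kappa₂ lam s t) ∧
    (∃ s ∈ Set.Icc (0 : ℝ) 1, ∃ t ∈ Set.Icc (0 : ℝ) 1, kappa₁ s t ≠ kappa₂ lam s t) ∧
    (∀ lam' ∈ Set.Ioo (0 : ℝ) 1, lam ≠ lam' →
        ∃ s ∈ Set.Icc (0 : ℝ) 1, ∃ t ∈ Set.Icc (0 : ℝ) 1,
          kappa₂ lam s t ≠ kappa₂ lam' s t) := by
  have hsq : Real.sqrt lam > 0 := Real.sqrt_pos.mpr hlam.1
  have hexp : Real.exp (-1) * Real.exp (-1) > 0 := by positivity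
  refine ⟨?_, ?_, ?_⟩
  · intro s _ t _ hband
    have h1 := phi0_mul_phi2 hband
    have h2 : phiBump 2 s * phiBump 0 t = 0 := by
      have : |t - s| ≤ 1 / 3 := by rwa [abs_sub_comm]
      have := phi0_mul_phi2 this
      linarith [this]
    simp [kappa₂, h1, h2]
  · refine ⟨1/6, by norm_num, 5/6, by norm_num, ?_⟩
    rw [kappa₁_val, kappa₂_val]
    positivity
  · intro lam' hlam' hne
    refine ⟨1/6, by norm_num, 5/6, by norm_num, ?_⟩
    rw [kappa₂_val, kappa₂_val]
    intro h
    have := mul_right_cancel₀ (ne_of_gt hexp) h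
    exact hne ((Real.sqrt_inj (le_of_lt hlam.1) (le_of_lt hlam'.1)).mp this)
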